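/- Let Ω be a nonempty open subset of ℝⁿ, M ≥ 1, γ(t) = M·t for t ∈ ℂ, and y ∈ Ω. If f ∈ C^∞(Ω)^{[γ,V]} is of order 0 and supp f = {y}, then there exist ε > 0 and g ∈ 𝓚_{M,ε}(ℂ,ℂ) such that f(ξ) = g(ξ(y)) for all ξ ∈ C^∞(Ω). Conversely, for every ε > 0 and every g ∈ 𝓚_{M,ε}(ℂ,ℂ), the set V = {ξ ∈ C^∞(Ω) : |ξ(y)| ≤ ε} is a neighborhood of 0 in C^∞(Ω) and the functional f defined by f(ξ) = g(ξ(y)) belongs to C^∞(Ω)^{[γ,V]}, is of order 0, and (when g ≠ 0) has supp f = {y}. -/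

import Mathlib

open Topology Filter Set

noncomputable section

abbrev Rn (n : ℕ) : Type := EuclideanSpace ℝ (Fin n)

/-- The model of `C^∞(Ω)`: functions smooth on `Ω` and vanishing outside `Ω`. -/
def cinfSubmodule (n : ℕ) (Ω : Set (Rn n)) : Submodule ℂ (Rn n → ℂ) where
  carrier := {g | ContDiffOn ℝ (⊤ : ℕ∞) g Ω ∧ ∀ x ∉ Ω, g x = 0}
  add_mem' := by
    rintro g h ⟨hg1, hg2⟩ ⟨hh1, hh2⟩
    refine ⟨hg1.add hh1, fun x hx => ?_⟩
    simp [Pi.add_apply, hg2 x hx, hh2 x hx]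
  zero_mem' := ⟨contDiffOn_const, fun _ _ => rfl⟩
  smul_mem' := by
    rintro c g ⟨hg1, hg2⟩
    refine ⟨hg1.const_smul c, fun x hx => ?_⟩
    simp [hg2 x hx]

/-- The model of the test-function space `C₀^∞(Ω)`. -/
def testSubmodule (n : ℕ) (Ω : Set (Rn n)) : Submodule ℂ (Rn n → ℂ) where
  carrier := {g | ContDiffOn ℝ (⊤ : ℕ∞) g Ω ∧ (∀ x ∉ Ω, g x = 0) ∧
    IsCompact (tsupport g) ∧ tsupport g ⊆ Ω}
  add_mem' := by
    rintro g h ⟨hg1, hg2, hg3, hg4⟩ ⟨hh1, hh2, hh3, hh4⟩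
    have hsub : tsupport (g + h) ⊆ tsupport g ∪ tsupport h := tsupport_add g h
    exact ⟨hg1.add hh1, fun x hx => by simp [hg2 x hx, hh2 x hx],
      (hg3.union hh3).of_isClosed_subset (isClosed_tsupport _) hsub,
      hsub.trans (union_subset hg4 hh4)⟩
  zero_mem' := by
    have h0 : tsupport (0 : Rn n → ℂ) = ∅ := by simp [tsupport]
    exact ⟨contDiffOn_const, fun _ _ => rfl, by rw [h0]; exact isCompact_empty,
      by rw [h0]; exact empty_subset Ω⟩
  smul_mem' := by
    rintro c g ⟨hg1, hg2, hg3, hg4⟩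
    have hsub : tsupport (c • g) ⊆ tsupport g := by
      refine closure_mono fun x hx => ?_
      simp only [Function.mem_support, Pi.smul_apply, smul_eq_mul] at hx ⊢
      exact fun h => hx (by simp [h])
    exact ⟨hg1.const_smul c, fun x hx => by simp [hg2 x hx],
      hg3.of_isClosed_subset (isClosed_tsupport _) hsub, hsub.trans hg4⟩

abbrev CInfOn (n : ℕ) (Ω : Set (Rn n)) : Type := ↥(cinfSubmodule n Ω)
abbrev TestFn (n : ℕ) (Ω : Set (Rn n)) : Type := ↥(testSubmodule n Ω)

/-- The natural inclusion of `C₀^∞(Ω)` into `C^∞(Ω)`. -/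
def toCInf {n : ℕ} {Ω : Set (Rn n)} (ξ : TestFn n Ω) : CInfOn n Ω :=
  ⟨ξ.val, ξ.2.1, ξ.2.2.1⟩

/-- The family of compact subsets of `Ω`. -/
def cptsIn (n : ℕ) (Ω : Set (Rn n)) : Set (Set (Rn n)) := {K | IsCompact K ∧ K ⊆ Ω}

/-- The family of all iterated derivatives (within `Ω`) of a function, seen as elements of
spaces of uniform convergence on compact subsets of `Ω`. -/
def derivsMap (n : ℕ) (Ω : Set (Rn n)) (g : Rn n → ℂ) :
    (k : ℕ) → UniformOnFun (Rn n) (ContinuousMultilinearMap ℝ (fun _ : Fin k => Rn n) ℂ)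
      (cptsIn n Ω) :=
  fun k => (UniformOnFun.ofFun (cptsIn n Ω)) (iteratedFDerivWithin ℝ k g Ω)

/-- The Fréchet topology of `C^∞(Ω)`: uniform convergence of all derivatives on all compact
subsets of `Ω`. -/
instance (priority := 2000) instCInfTop (n : ℕ) (Ω : Set (Rn n)) :
    TopologicalSpace (CInfOn n Ω) :=
  TopologicalSpace.induced (fun ξ => derivsMap n Ω ξ.val) inferInstance

/-- A candidate topology for the inductive limit topology on `C₀^∞(Ω)`: a locally convex
vector topology making all the inclusions `C^∞(K) → C₀^∞(Ω)` continuous, where `C^∞(K)`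
(the test functions supported in the compact set `K ⊆ Ω`) carries the Fréchet topology. -/
def IsLFCandidate (n : ℕ) (Ω : Set (Rn n)) (t : TopologicalSpace (TestFn n Ω)) : Prop :=
  @IsTopologicalAddGroup (TestFn n Ω) t _ ∧
  @ContinuousSMul ℂ (TestFn n Ω) _ _ t ∧
  @LocallyConvexSpace ℝ (TestFn n Ω) _ _ _ _ t ∧
  ∀ K : Set (Rn n), IsCompact K → K ⊆ Ω →
    @Continuous {ξ : TestFn n Ω // tsupport ξ.val ⊆ K} (TestFn n Ω)
      (TopologicalSpace.induced (fun ζ => derivsMap n Ω ζ.val.val) inferInstance) t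
      Subtype.val

/-- The usual inductive limit (LF) topology of `C₀^∞(Ω)`: the finest locally convex vector
topology making all inclusions `C^∞(K) → C₀^∞(Ω)` continuous. -/
instance (priority := 2000) instTestTop (n : ℕ) (Ω : Set (Rn n)) :
    TopologicalSpace (TestFn n Ω) :=
  sSup {t | IsLFCandidate n Ω t}

/-- The family `C(0)` of the paper. -/
def CzeroFam (γ : ℂ → ℂ) : Prop :=
  Tendsto γ (𝓝 0) (𝓝 0) ∧ γ 0 = 0 ∧ ∀ t : ℂ, ‖t‖ ≤ 1 → ‖t‖ ≤ ‖γ t‖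

/-- The family `𝓛_{γ,U}(X, Y)` of demi-linear maps. -/
def DemiL {X Y : Type*} [AddCommGroup X] [Module ℂ X] [AddCommGroup Y] [Module ℂ Y]
    (γ : ℂ → ℂ) (U : Set X) (f : X → Y) : Prop :=
  f 0 = 0 ∧ ∀ x : X, ∀ u ∈ U, ∀ t : ℂ, ‖t‖ ≤ 1 →
    ∃ r s : ℂ, ‖r - 1‖ ≤ ‖γ t‖ ∧ ‖s‖ ≤ ‖γ t‖ ∧ f (x + t • u) = r • f x + s • f u

/-- The family `𝓚_{γ,U}(X, ℂ)`. -/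
def DemiK {X : Type*} [AddCommGroup X] [Module ℂ X]
    (γ : ℂ → ℂ) (U : Set X) (f : X → ℂ) : Prop :=
  f 0 = 0 ∧ ∀ x : X, ∀ u ∈ U, ∀ t : ℂ, ‖t‖ ≤ 1 →
    ∃ s : ℂ, ‖s‖ ≤ ‖γ t‖ ∧ f (x + t • u) = f x + s * f u

/-- `supp ξ = closure {x ∈ Ω : ξ x ≠ 0} ∩ Ω`. -/
def suppFun {n : ℕ} (Ω : Set (Rn n)) (g : Rn n → ℂ) : Set (Rn n) :=
  closure {x | x ∈ Ω ∧ g x ≠ 0} ∩ Ω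

/-- The support of a functional `f` defined on a set `S` of functions on `Ω`. -/
def fsupp {n : ℕ} {S : Type*} (Ω : Set (Rn n)) (coeF : S → (Rn n → ℂ)) (f : S → ℂ) :
    Set (Rn n) :=
  {x | x ∈ Ω ∧ ∀ G : Set (Rn n), IsOpen G → G ⊆ Ω → x ∈ G →
    ∃ ξ : S, suppFun Ω (coeF ξ) ⊆ G ∧ f ξ ≠ 0}

/-- `Σ_{|α| ≤ k} sup_K |∂^α g|`, expressed via iterated Fréchet derivatives within `Ω`. -/
def pnorm {n : ℕ} (Ω K : Set (Rn n)) (k : ℕ) (g : Rn n → ℂ) : ℝ :=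
  ∑ i ∈ Finset.range (k + 1), ⨆ x ∈ K, ‖iteratedFDerivWithin ℝ i g Ω x‖

/-- Condition (1.1) of the paper. -/
def Cond11 {n : ℕ} (Ω : Set (Rn n)) (f : TestFn n Ω → ℂ) : Prop :=
  ∀ K : Set (Rn n), IsCompact K → K ⊆ Ω → ∃ C > 0, ∃ k : ℕ,
    ∀ ξ : TestFn n Ω, suppFun Ω ξ.val ⊆ K → ‖f ξ‖ ≤ C * pnorm Ω K k ξ.val

/-- Pointwise multiplication of a test function and a smooth function, a test function. -/
def mulTest {n : ℕ} {Ω : Set (Rn n)} (𝒳 : TestFn n Ω) (ξ : CInfOn n Ω) : TestFn n Ω := by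
  refine ⟨fun x => 𝒳.val x * ξ.val x, ?_⟩
  obtain ⟨hs, hz, hc, hsubΩ⟩ := 𝒳.2
  obtain ⟨hs', hz'⟩ := ξ.2
  have hsupp : tsupport (fun x => 𝒳.val x * ξ.val x) ⊆ tsupport (𝒳.val : Rn n → ℂ) :=
    tsupport_mul_subset_left
  exact ⟨hs.mul hs', fun x hx => by show 𝒳.val x * ξ.val x = 0; rw [hz x hx, zero_mul],
    hc.of_isClosed_subset (isClosed_tsupport _) hsupp, hsupp.trans hsubΩ⟩

open scoped Classical in
/-- The canonical extension of a functional on `C₀^∞(Ω)` to smooth functions, defined via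
`f`-decompositions `ξ = ξ₀ + ξ₁` with `ξ₀ ∈ C₀^∞(Ω)` and `supp ξ₁ ∩ supp f = ∅`. -/
def canonExt {n : ℕ} {Ω : Set (Rn n)} (f : TestFn n Ω → ℂ) (ξ : CInfOn n Ω) : ℂ :=
  if h : ∃ ξ₀ : TestFn n Ω, suppFun Ω (ξ.val - ξ₀.val) ∩ fsupp Ω Subtype.val f = ∅
  then f h.choose else 0

end

/-- The family `𝓚_{M,ε}(ℂ, ℂ)`. -/
def DemiKC (M ε : ℝ) (g : ℂ → ℂ) : Prop :=
  g 0 = 0 ∧ ∀ z u t : ℂ, ‖u‖ ≤ ε → ‖t‖ ≤ 1 →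
    ∃ s : ℂ, ‖s‖ ≤ M * ‖t‖ ∧ g (z + t * u) = g z + s * g u

/-!
Testing the defining condition of `𝓚_{γ,V}` with `t = 1` on the `N` steps of `w = N • (w / N)`,
where `w / N ∈ V`, gives `‖f (ξ + w) - f ξ‖ ≤ N * M * ‖f (w / N)‖`. Hence adding a function all of
whose multiples are annihilated by `f` does not change `f`; with a partition of unity and the
continuity of `f` this shows `f ξ = 0` whenever `ξ` vanishes near `supp f = {y}`. If `ξ y = 0`,
cutting `ξ` off near `y` leaves a function `w` that is uniformly small on a fixed ball, and the
order-0 bound applied to `w / N` makes `‖f (ζ + w) - f ζ‖ ≤ M * C * sup ‖w‖` as small as we like.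
So `f ξ` depends only on `ξ y`, through `g z = f (z • 1_Ω)`. Conversely, iterating the
`𝓚_{M,ε}` condition makes `g` Lipschitz, which gives the continuity and order `0` of
`ξ ↦ g (ξ y)`.
-/

open Metric
open scoped ContDiff Manifold

lemma exists_contDiff_eqOn_one_tsupport_subset {E : Type*} [NormedAddCommGroup E]
    [NormedSpace ℝ E] [FiniteDimensional ℝ E] {K U : Set E} (hK : IsCompact K) (hU : IsOpen U)
    (hKU : K ⊆ U) :
    ∃ θ : E → ℝ, ContDiff ℝ ∞ θ ∧ (∀ x, θ x ∈ Icc 0 1) ∧ EqOn θ 1 K ∧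
      HasCompactSupport θ ∧ tsupport θ ⊆ U := by
  obtain ⟨L, hL, hKL, hLU⟩ := exists_compact_between hK hU hKU
  obtain ⟨θ, hθ0, hθ1, hθI⟩ := exists_contMDiffMap_zero_one_of_isClosed 𝓘(ℝ, E) (n := ⊤)
    isOpen_interior.isClosed_compl hK.isClosed (disjoint_compl_left_iff_subset.2 hKL)
  have hsupp : tsupport θ ⊆ L :=
    closure_minimal (fun x hx => by_contra fun hxL => hx (hθ0 fun h => hxL (interior_subset h)))
      hL.isClosed
  exact ⟨θ, θ.contMDiff.contDiff, hθI, hθ1,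
    hL.of_isClosed_subset (isClosed_tsupport _) hsupp, hsupp.trans hLU⟩

lemma norm_add_nsmul_sub_le {G E : Type*} [AddMonoid G] [SeminormedAddGroup E] {F : G → E}
    {u : G} {a : ℝ} (h : ∀ z, ‖F (z + u) - F z‖ ≤ a) (z : G) (N : ℕ) :
    ‖F (z + N • u) - F z‖ ≤ N * a := by
  induction N with
  | zero => simp
  | succ N ih =>
    calc ‖F (z + (N + 1) • u) - F z‖
        ≤ ‖F (z + N • u + u) - F (z + N • u)‖ + ‖F (z + N • u) - F z‖ := by
          rw [succ_nsmul, ← add_assoc]; exact norm_sub_le_norm_sub_add_norm_sub _ _ _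
      _ ≤ a + N * a := add_le_add (h _) ih
      _ = (N + 1 : ℕ) * a := by push_cast; ring

lemma IsOpen.exists_isCompact_eventually_subset_interior {E : Type*} [TopologicalSpace E]
    [LocallyCompactSpace E] [SecondCountableTopology E] {Ω : Set E} (hΩ : IsOpen Ω) :
    ∃ K : ℕ → Set E, (∀ m, IsCompact (K m) ∧ K m ⊆ Ω) ∧
      ∀ L, IsCompact L → L ⊆ Ω → ∀ᶠ m in atTop, L ⊆ interior (K m) := by
  have := hΩ.locallyCompactSpace
  let E' := CompactExhaustion.choice Ω
  refine ⟨fun m => (↑) '' E' m, fun m => ⟨(E'.isCompact m).image continuous_subtype_val,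
    by rintro _ ⟨x, -, rfl⟩; exact x.2⟩, fun L hL hLΩ => ?_⟩
  have hL' : IsCompact (((↑) : Ω → E) ⁻¹' L) := by
    rw [Topology.IsEmbedding.subtypeVal.isCompact_iff, Subtype.image_preimage_coe,
      inter_eq_self_of_subset_right hLΩ]
    exact hL
  obtain ⟨m₀, hm₀⟩ := E'.exists_superset_of_isCompact hL'
  filter_upwards [eventually_gt_atTop m₀] with m hm x hx
  refine interior_mono (image_mono interior_subset) ?_
  rw [(hΩ.isOpenMap_subtype_val _ isOpen_interior).interior_eq]
  exact ⟨⟨x, hLΩ hx⟩, E'.subset_interior hm (hm₀ hx), rfl⟩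

namespace DemiK

variable {X : Type*} [AddCommGroup X] [Module ℂ X] {M : ℝ} {V : Set X} {f : X → ℂ}

lemma norm_add_sub_le (hf : DemiK (fun t : ℂ => (M : ℂ) * t) V f) {u : X} (hu : u ∈ V)
    (ξ : X) : ‖f (ξ + u) - f ξ‖ ≤ |M| * ‖f u‖ := by
  obtain ⟨s, hs, heq⟩ := hf.2 ξ u hu 1 (by simp)
  rw [one_smul] at heq
  rw [heq, add_sub_cancel_left, norm_mul]
  simp only [mul_one, Complex.norm_real, Real.norm_eq_abs] at hs
  gcongr

lemma norm_add_sub_le_of_inv_smul_mem (hf : DemiK (fun t : ℂ => (M : ℂ) * t) V f) {w : X}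
    {N : ℕ} (hN : N ≠ 0) (hw : (N : ℂ)⁻¹ • w ∈ V) (ξ : X) :
    ‖f (ξ + w) - f ξ‖ ≤ N * (|M| * ‖f ((N : ℂ)⁻¹ • w)‖) := by
  have hNw : N • ((N : ℂ)⁻¹ • w) = w := by
    rw [← Nat.cast_smul_eq_nsmul ℂ, smul_smul, mul_inv_cancel₀ (by exact_mod_cast hN), one_smul]
  simpa only [hNw] using norm_add_nsmul_sub_le (hf.norm_add_sub_le hw) ξ N

lemma demiKC_comp_smul (hf : DemiK (fun t : ℂ => (M : ℂ) * t) V f) (hM : 0 ≤ M) {χ : X}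
    {ε : ℝ} (hχ : ∀ u ∈ closedBall (0 : ℂ) ε, u • χ ∈ V) :
    DemiKC M ε (fun z => f (z • χ)) := by
  refine ⟨by simpa using hf.1, fun z u t hu ht => ?_⟩
  obtain ⟨s, hs, heq⟩ := hf.2 (z • χ) (u • χ) (hχ u (mem_closedBall_zero_iff.2 hu)) t ht
  refine ⟨s, by simpa [abs_of_nonneg hM] using hs, ?_⟩
  simpa only [add_smul, smul_smul] using heq

end DemiK

namespace DemiKC

variable {M ε : ℝ} {g : ℂ → ℂ}

lemma norm_add_sub_le_of_norm_le (hg : DemiKC M ε g) (hε : 0 < ε) (z : ℂ) {w : ℂ}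
    (hw : ‖w‖ ≤ ε) : ‖g (z + w) - g z‖ ≤ M * ‖g ε‖ / ε * ‖w‖ := by
  have hεC : (ε : ℂ) ≠ 0 := by exact_mod_cast hε.ne'
  have hwε : ‖w / ε‖ = ‖w‖ / ε := by simp [abs_of_pos hε]
  obtain ⟨s, hs, heq⟩ := hg.2 z ε (w / ε) (by simp [abs_of_pos hε])
    (by rw [hwε]; exact div_le_one_of_le₀ hw hε.le)
  rw [div_mul_cancel₀ w hεC] at heq
  rw [hwε] at hs
  rw [heq, add_sub_cancel_left, norm_mul]
  calc ‖s‖ * ‖g ε‖ ≤ M * (‖w‖ / ε) * ‖g ε‖ := by gcongr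
    _ = M * ‖g ε‖ / ε * ‖w‖ := by ring

lemma norm_add_sub_le (hg : DemiKC M ε g) (hε : 0 < ε) (z w : ℂ) :
    ‖g (z + w) - g z‖ ≤ M * ‖g ε‖ / ε * ‖w‖ := by
  obtain ⟨N, hN⟩ := exists_nat_gt (‖w‖ / ε)
  have hN0 : (0 : ℝ) < N := (div_nonneg (norm_nonneg w) hε.le).trans_lt hN
  have hu : ‖(N : ℂ)⁻¹ * w‖ = ‖w‖ / N := by simp [div_eq_inv_mul]
  have huε : ‖(N : ℂ)⁻¹ * w‖ ≤ ε := by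
    rw [hu, div_le_iff₀ hN0]
    linarith [(div_lt_iff₀ hε).1 hN]
  have hNu : N • ((N : ℂ)⁻¹ * w) = w := by
    rw [← Nat.cast_smul_eq_nsmul ℂ, smul_eq_mul, mul_inv_cancel_left₀ (by exact_mod_cast hN0.ne')]
  calc ‖g (z + w) - g z‖ = ‖g (z + N • ((N : ℂ)⁻¹ * w)) - g z‖ := by rw [hNu]
    _ ≤ N * (M * ‖g ε‖ / ε * (‖w‖ / N)) := by
        rw [← hu]
        exact norm_add_nsmul_sub_le (fun z => hg.norm_add_sub_le_of_norm_le hε z huε) z N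
    _ = M * ‖g ε‖ / ε * ‖w‖ := by field_simp

lemma continuous (hg : DemiKC M ε g) (hε : 0 < ε) : Continuous g := by
  refine (LipschitzWith.of_dist_le_mul fun z w => ?_).continuous (K := (M * ‖g ε‖ / ε).toNNReal)
  rw [dist_eq_norm, dist_eq_norm]
  calc ‖g z - g w‖ = ‖g (w + (z - w)) - g w‖ := by rw [add_sub_cancel]
    _ ≤ M * ‖g ε‖ / ε * ‖z - w‖ := hg.norm_add_sub_le hε w (z - w)
    _ ≤ _ := by gcongr; exact Real.le_coe_toNNReal _

end DemiKC

lemma exists_isOpen_of_notMem_fsupp {n : ℕ} {Ω : Set (Rn n)} {S : Type*}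
    {coeF : S → Rn n → ℂ} {f : S → ℂ} {x : Rn n} (hxΩ : x ∈ Ω)
    (hx : x ∉ fsupp Ω coeF f) :
    ∃ G, IsOpen G ∧ x ∈ G ∧ ∀ ξ : S, suppFun Ω (coeF ξ) ⊆ G → f ξ = 0 := by
  simp only [fsupp, mem_ofPred_eq, hxΩ, true_and, not_forall, not_exists, not_and,
    not_not] at hx
  obtain ⟨G, hGo, -, hxG, hG⟩ := hx
  exact ⟨G, hGo, hxG, hG⟩

namespace CInfOn

variable {n : ℕ} {Ω : Set (Rn n)}

lemma suppFun_subset_tsupport (g : Rn n → ℂ) : suppFun Ω g ⊆ tsupport g :=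
  fun _ hx => closure_mono (fun _ hz => hz.2) hx.1

lemma apply_eq_zero_of_notMem_suppFun {ξ : CInfOn n Ω} {x : Rn n}
    (hx : x ∉ suppFun Ω ξ.val) : ξ.val x = 0 := by
  by_contra h
  by_cases hxΩ : x ∈ Ω
  · exact hx ⟨subset_closure ⟨hxΩ, h⟩, hxΩ⟩
  · exact h (ξ.2.2 x hxΩ)

lemma suppFun_smul_subset (c : ℂ) (ξ : CInfOn n Ω) :
    suppFun Ω (c • ξ).val ⊆ suppFun Ω ξ.val :=
  inter_subset_inter_left _ (closure_mono fun _ hx => ⟨hx.1, right_ne_zero_of_mul hx.2⟩)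

lemma norm_apply_le_iSup {K : Set (Rn n)} (hK : IsCompact K) (hKΩ : K ⊆ Ω)
    {ξ : CInfOn n Ω} (hξ : suppFun Ω ξ.val ⊆ K) (y : Rn n) :
    ‖ξ.val y‖ ≤ ⨆ x ∈ K, ‖ξ.val x‖ := by
  by_cases hyK : y ∈ K
  · obtain ⟨B, hB⟩ := hK.exists_bound_of_continuousOn (ξ.2.1.continuousOn.mono hKΩ)
    have hbdd : BddAbove (range fun x => ⨆ _ : x ∈ K, ‖ξ.val x‖) :=
      ⟨max B 0, forall_mem_range.2 fun x =>
        Real.iSup_le (fun hx => (hB x hx).trans (le_max_left _ _)) (le_max_right _ _)⟩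
    exact (ciSup_pos hyK).symm.le.trans (le_ciSup hbdd y)
  · rw [apply_eq_zero_of_notMem_suppFun fun h => hyK (hξ h), norm_zero]
    exact Real.iSup_nonneg fun _ => Real.iSup_nonneg fun _ => norm_nonneg _

noncomputable def indicatorOne (n : ℕ) (Ω : Set (Rn n)) : CInfOn n Ω :=
  ⟨Ω.indicator 1, contDiffOn_const.congr fun _ hx => indicator_of_mem hx _,
    fun _ hx => indicator_of_notMem hx _⟩

def realMul (θ : Rn n → ℝ) (hθ : ContDiff ℝ ∞ θ) (ξ : CInfOn n Ω) : CInfOn n Ω :=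
  ⟨fun x => (θ x : ℂ) * ξ.val x, (Complex.ofRealCLM.contDiff.comp hθ).contDiffOn.mul ξ.2.1,
    fun x hx => by simp [ξ.2.2 x hx]⟩

lemma tsupport_realMul_subset (θ : Rn n → ℝ) (hθ : ContDiff ℝ ∞ θ) (ξ : CInfOn n Ω) :
    tsupport (realMul θ hθ ξ).val ⊆ tsupport θ :=
  closure_mono fun x hx h => hx (by simp [realMul, h])

lemma tendsto_nhds_of_tendstoUniformlyOn {α : Type*} {l : Filter α} {F : α → CInfOn n Ω}
    {ξ : CInfOn n Ω}
    (h : ∀ (k : ℕ) (K : Set (Rn n)), IsCompact K → K ⊆ Ω →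
      TendstoUniformlyOn (fun a => iteratedFDerivWithin ℝ k (F a).val Ω)
        (iteratedFDerivWithin ℝ k ξ.val Ω) l K) :
    Tendsto F l (𝓝 ξ) := by
  rw [show 𝓝 ξ = comap (fun ζ : CInfOn n Ω => derivsMap n Ω ζ.val)
      (𝓝 (derivsMap n Ω ξ.val)) from nhds_induced _ _, tendsto_comap_iff, tendsto_pi_nhds]
  intro k
  rw [UniformOnFun.tendsto_iff_tendstoUniformlyOn]
  rintro K ⟨hK, hKΩ⟩
  exact h k K hK hKΩ

lemma tendsto_nhds_of_eventually_eqOn {α : Type*} {l : Filter α} {F : α → CInfOn n Ω}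
    {ξ : CInfOn n Ω}
    (h : ∀ K : Set (Rn n), IsCompact K → K ⊆ Ω →
      ∀ᶠ a in l, ∃ U, IsOpen U ∧ K ⊆ U ∧ EqOn (F a).val ξ.val U) :
    Tendsto F l (𝓝 ξ) := by
  refine tendsto_nhds_of_tendstoUniformlyOn fun k K hK hKΩ => ?_
  rw [Metric.tendstoUniformlyOn_iff]
  intro ε hε
  filter_upwards [h K hK hKΩ] with a ⟨U, hU, hKU, hEq⟩ x hx
  have hderiv : iteratedFDerivWithin ℝ k (F a).val Ω x = iteratedFDerivWithin ℝ k ξ.val Ω x :=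
    Filter.EventuallyEq.iteratedFDerivWithin_eq
      (mem_of_superset (mem_nhdsWithin_of_mem_nhds (hU.mem_nhds (hKU hx))) hEq) (hEq (hKU hx)) k
  rwa [hderiv, dist_self]

lemma tendsto_smul_nhds_zero (hΩ : IsOpen Ω) (w : CInfOn n Ω) :
    Tendsto (fun c : ℂ => c • w) (𝓝 0) (𝓝 0) := by
  refine tendsto_nhds_of_tendstoUniformlyOn fun k K hK hKΩ => ?_
  have hkΩ : ContDiffOn ℝ k w.val Ω := w.2.1.of_le (by exact_mod_cast le_top)
  obtain ⟨B, hB⟩ := hK.exists_bound_of_continuousOn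
    ((hkΩ.continuousOn_iteratedFDerivWithin le_rfl hΩ.uniqueDiffOn).mono hKΩ)
  rw [Metric.tendstoUniformlyOn_iff]
  intro ε hε
  have hsmall : ∀ᶠ c : ℂ in 𝓝 0, ‖c‖ * B < ε :=
    ((continuous_norm.mul continuous_const).tendsto' (0 : ℂ) 0 (by simp)).eventually
      (gt_mem_nhds hε)
  filter_upwards [hsmall] with c hc x hx
  have hderiv :
      iteratedFDerivWithin ℝ k (c • w).val Ω x = c • iteratedFDerivWithin ℝ k w.val Ω x :=
    iteratedFDerivWithin_const_smul_apply (hkΩ x (hKΩ hx)) hΩ.uniqueDiffOn (hKΩ hx)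
  rw [hderiv, show (0 : CInfOn n Ω).val = 0 from rfl, iteratedFDerivWithin_zero,
    Pi.zero_apply, dist_zero_left, norm_smul]
  exact (mul_le_mul_of_nonneg_left (hB x hx) (norm_nonneg c)).trans_lt hc

lemma exists_inv_natCast_smul_mem (hΩ : IsOpen Ω) {V : Set (CInfOn n Ω)}
    (hV : V ∈ 𝓝 (0 : CInfOn n Ω)) (w : CInfOn n Ω) : ∃ N : ℕ, N ≠ 0 ∧ (N : ℂ)⁻¹ • w ∈ V :=
  ((eventually_ne_atTop 0).and
    (((tendsto_smul_nhds_zero hΩ w).comp tendsto_inv_atTop_nhds_zero_nat).eventually hV)).exists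

lemma continuous_eval_const {y : Rn n} (hy : y ∈ Ω) : Continuous fun ξ : CInfOn n Ω => ξ.val y := by
  have hy' : {y} ∈ cptsIn n Ω := ⟨isCompact_singleton, singleton_subset_iff.2 hy⟩
  have := (continuousMultilinearCurryFin0 ℝ (Rn n) ℂ).continuous.comp <|
    (UniformOnFun.uniformContinuous_eval_of_mem _ _ (mem_singleton y) hy').continuous.comp <|
      (_root_.continuous_apply 0).comp
        (continuous_induced_dom : Continuous fun ξ : CInfOn n Ω => derivsMap n Ω ξ.val)
  exact this.congr fun _ => rfl

lemma exists_tendsto_isCompact_tsupport (hΩ : IsOpen Ω) (ζ : CInfOn n Ω) :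
    ∃ ζs : ℕ → CInfOn n Ω, (∀ m, IsCompact (tsupport (ζs m).val) ∧ tsupport (ζs m).val ⊆ Ω ∧
      Function.support (ζs m).val ⊆ Function.support ζ.val) ∧ Tendsto ζs atTop (𝓝 ζ) := by
  obtain ⟨K, hK, hKev⟩ := hΩ.exists_isCompact_eventually_subset_interior
  choose θ hθ _ hθ1 hθc hθΩ using fun m =>
    exists_contDiff_eqOn_one_tsupport_subset (hK m).1 hΩ (hK m).2
  refine ⟨fun m => realMul (θ m) (hθ m) ζ, fun m => ⟨?_, ?_, ?_⟩, ?_⟩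
  · exact IsCompact.of_isClosed_subset (hθc m) (isClosed_tsupport _) (tsupport_realMul_subset ..)
  · exact (tsupport_realMul_subset ..).trans (hθΩ m)
  · exact fun x hx h => hx (by simp [realMul, h])
  · refine tendsto_nhds_of_eventually_eqOn fun L hL hLΩ => ?_
    filter_upwards [hKev L hL hLΩ] with m hm
    exact ⟨interior (K m), isOpen_interior, hm,
      fun x hx => by simp [realMul, hθ1 m (interior_subset hx)]⟩

lemma exists_eventuallyEq_norm_le (hΩ : IsOpen Ω) {y : Rn n}
    (hy : y ∈ Ω) {η : CInfOn n Ω} (hη : η.val y = 0) {R e : ℝ} (hR : 0 < R) (he : 0 < e) :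
    ∃ w : CInfOn n Ω, tsupport w.val ⊆ closedBall y R ∧ (∀ x, ‖w.val x‖ ≤ e) ∧
      η.val =ᶠ[𝓝 y] w.val := by
  obtain ⟨δ₀, hδ₀, hsmall⟩ := Metric.continuousAt_iff.1
    (η.2.1.continuousOn.continuousAt (hΩ.mem_nhds hy)) e he
  set δ := min δ₀ R
  have hδ : 0 < δ := lt_min hδ₀ hR
  obtain ⟨θ, hθ, hθI, hθ1, -, hθδ⟩ := exists_contDiff_eqOn_one_tsupport_subset
    (isCompact_closedBall y (δ / 2)) isOpen_ball (closedBall_subset_ball (half_lt_self hδ))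
  refine ⟨realMul θ hθ η, (tsupport_realMul_subset ..).trans <|
    hθδ.trans <| ball_subset_closedBall.trans <| closedBall_subset_closedBall (min_le_right _ _),
    fun x => ?_, ?_⟩
  · by_cases hx : x ∈ tsupport θ
    · have hxη : ‖η.val x‖ ≤ e := by
        simpa [hη] using (hsmall ((mem_ball.1 (hθδ hx)).trans_le (min_le_left _ _))).le
      simpa [realMul, abs_of_nonneg (hθI x).1] using
        mul_le_mul (hθI x).2 hxη (norm_nonneg _) zero_le_one
    · simp [realMul, image_eq_zero_of_notMem_tsupport hx, he.le]
  · filter_upwards [closedBall_mem_nhds y (half_pos hδ)] with x hx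
    simp [realMul, hθ1 hx]

lemma setOf_norm_apply_le_mem_nhds {y : Rn n} (hy : y ∈ Ω) {ε : ℝ} (hε : 0 < ε) :
    {ξ : CInfOn n Ω | ‖ξ.val y‖ ≤ ε} ∈ 𝓝 (0 : CInfOn n Ω) := by
  simpa [Set.preimage, mem_closedBall_zero_iff] using
    (continuous_eval_const hy).tendsto (0 : CInfOn n Ω) (closedBall_mem_nhds _ hε)

lemma demiK_comp_apply {M ε : ℝ} {g : ℂ → ℂ} (hg : DemiKC M ε g) (y : Rn n) :
    DemiK (fun t : ℂ => (M : ℂ) * t) {ξ : CInfOn n Ω | ‖ξ.val y‖ ≤ ε}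
      (fun ξ : CInfOn n Ω => g (ξ.val y)) := by
  refine ⟨hg.1, fun ξ u hu t ht => ?_⟩
  obtain ⟨s, hs, heq⟩ := hg.2 (ξ.val y) (u.val y) t hu ht
  refine ⟨s, hs.trans ?_, heq⟩
  rw [norm_mul, Complex.norm_real, Real.norm_eq_abs]
  gcongr
  exact le_abs_self M

lemma fsupp_comp_apply (hΩ : IsOpen Ω) {y : Rn n} (hy : y ∈ Ω) {g : ℂ → ℂ} (hg0 : g 0 = 0)
    (hg : g ≠ 0) : fsupp Ω Subtype.val (fun ξ : CInfOn n Ω => g (ξ.val y)) = {y} := by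
  obtain ⟨w₀, hw₀⟩ : ∃ w₀, g w₀ ≠ 0 := by
    by_contra! h
    exact hg (funext h)
  ext x
  refine ⟨fun ⟨hxΩ, hx⟩ => ?_, ?_⟩
  · by_contra hxy
    obtain ⟨ξ, hξ, hgξ⟩ := hx (Ω \ {y}) (hΩ.sdiff isClosed_singleton) sdiff_subset ⟨hxΩ, hxy⟩
    exact hgξ (by simp only [apply_eq_zero_of_notMem_suppFun fun h => (hξ h).2 rfl, hg0])
  · rintro rfl
    refine ⟨hy, fun G hGo _ hyG => ?_⟩
    obtain ⟨θ, hθ, -, hθ1, -, hθG⟩ := exists_contDiff_eqOn_one_tsupport_subset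
      isCompact_singleton hGo (singleton_subset_iff.2 hyG)
    refine ⟨w₀ • realMul θ hθ (indicatorOne n Ω), (suppFun_smul_subset _ _).trans <|
      (suppFun_subset_tsupport _).trans <| (tsupport_realMul_subset ..).trans hθG, ?_⟩
    simpa [realMul, indicatorOne, hθ1 rfl, hy] using hw₀

end CInfOn

namespace DemiK

open CInfOn

variable {n : ℕ} {Ω : Set (Rn n)} {M : ℝ} {V : Set (CInfOn n Ω)} {f : CInfOn n Ω → ℂ}

lemma apply_add_eq_of_forall_smul (hf : DemiK (fun t : ℂ => (M : ℂ) * t) V f)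
    (hΩ : IsOpen Ω) (hV : V ∈ 𝓝 0) {w : CInfOn n Ω} (hw : ∀ c : ℂ, f (c • w) = 0)
    (ξ : CInfOn n Ω) : f (ξ + w) = f ξ := by
  obtain ⟨N, hN, hNw⟩ := exists_inv_natCast_smul_mem hΩ hV w
  have := hf.norm_add_sub_le_of_inv_smul_mem hN hNw ξ
  rw [hw, norm_zero, mul_zero, mul_zero] at this
  exact sub_eq_zero.1 (norm_le_zero_iff.1 this)

lemma apply_eq_zero_of_isCompact_tsupport (hf : DemiK (fun t : ℂ => (M : ℂ) * t) V f)
    (hΩ : IsOpen Ω) (hV : V ∈ 𝓝 0) {ζ : CInfOn n Ω} (hζ : IsCompact (tsupport ζ.val))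
    (hloc : ∀ x ∈ tsupport ζ.val, ∃ G, IsOpen G ∧ x ∈ G ∧
      ∀ ξ : CInfOn n Ω, suppFun Ω ξ.val ⊆ G → f ξ = 0) :
    f ζ = 0 := by
  choose G hGo hxG hGf using hloc
  obtain ⟨t, ht⟩ := hζ.elim_finite_subcover (fun x : tsupport ζ.val => G x x.2)
    (fun _ => hGo _ _) fun x hx => mem_iUnion.2 ⟨⟨x, hx⟩, hxG x hx⟩
  obtain ⟨ρ, hρ⟩ := SmoothPartitionOfUnity.exists_isSubordinate 𝓘(ℝ, Rn n)
    (isClosed_tsupport ζ.val) (fun i : t => G i.1 i.1.2) (fun _ => hGo _ _)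
    (by simpa only [iUnion_subtype] using ht)
  let w : t → CInfOn n Ω := fun i => realMul (ρ i) (ρ i).contMDiff.contDiff ζ
  have hsum : ∑ i, w i = ζ := by
    ext x
    simp only [w, realMul, Submodule.coe_sum, Finset.sum_apply, ← Finset.sum_mul,
      ← Complex.ofReal_sum]
    by_cases hx : x ∈ tsupport ζ.val
    · rw [← finsum_eq_sum_of_fintype, ρ.sum_eq_one hx, Complex.ofReal_one, one_mul]
    · rw [image_eq_zero_of_notMem_tsupport hx, mul_zero]
  have hnull : ∀ i (c : ℂ), f (c • w i) = 0 := fun i c =>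
    hGf _ _ _ ((suppFun_smul_subset c _).trans <| (suppFun_subset_tsupport _).trans <|
      (tsupport_realMul_subset ..).trans (hρ i))
  have hpartial : ∀ s : Finset t, f (∑ i ∈ s, w i) = 0 := by
    intro s
    induction s using Finset.induction_on with
    | empty => simpa using hf.1
    | insert i s hi ih =>
      rw [Finset.sum_insert hi, add_comm, hf.apply_add_eq_of_forall_smul hΩ hV (hnull i), ih]
  rw [← hsum]
  exact hpartial Finset.univ

lemma apply_eq_zero_of_eqOn_zero (hf : DemiK (fun t : ℂ => (M : ℂ) * t) V f)
    (hΩ : IsOpen Ω) (hV : V ∈ 𝓝 0) (hfc : Continuous f) {U : Set (Rn n)} (hU : IsOpen U)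
    (hfU : fsupp Ω Subtype.val f ⊆ U) {ζ : CInfOn n Ω} (hζ : EqOn ζ.val 0 U) : f ζ = 0 := by
  obtain ⟨ζs, hζs, hlim⟩ := exists_tendsto_isCompact_tsupport hΩ ζ
  have hzero : ∀ m, f (ζs m) = 0 := fun m => by
    obtain ⟨hc, hcΩ, hsupp⟩ := hζs m
    refine hf.apply_eq_zero_of_isCompact_tsupport hΩ hV hc fun x hx => ?_
    have hxU : x ∉ U := closure_minimal (hsupp.trans fun z hz hzU => hz (hζ hzU))
      hU.isClosed_compl hx
    exact exists_isOpen_of_notMem_fsupp (hcΩ hx) fun h => hxU (hfU h)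
  exact tendsto_nhds_unique ((hfc.tendsto ζ).comp hlim) (by simp [Function.comp_def, hzero])

lemma norm_apply_add_sub_le (hf : DemiK (fun t : ℂ => (M : ℂ) * t) V f)
    (hΩ : IsOpen Ω) (hV : V ∈ 𝓝 0) {K : Set (Rn n)} {C : ℝ} (hC : 0 ≤ C)
    (hord : ∀ ξ : CInfOn n Ω, suppFun Ω ξ.val ⊆ K → ‖f ξ‖ ≤ C * ⨆ x ∈ K, ‖ξ.val x‖)
    {w : CInfOn n Ω} (hwK : suppFun Ω w.val ⊆ K) {B : ℝ} (hB : 0 ≤ B)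
    (hwB : ∀ x ∈ K, ‖w.val x‖ ≤ B) (ξ : CInfOn n Ω) :
    ‖f (ξ + w) - f ξ‖ ≤ |M| * C * B := by
  obtain ⟨N, hN, hNw⟩ := exists_inv_natCast_smul_mem hΩ hV w
  have hN' : (0 : ℝ) < N := by positivity
  have hsup : ⨆ x ∈ K, ‖((N : ℂ)⁻¹ • w).val x‖ ≤ (N : ℝ)⁻¹ * B :=
    Real.iSup_le (fun x => Real.iSup_le (fun hx => by
      simpa [norm_mul] using mul_le_mul_of_nonneg_left (hwB x hx) (inv_nonneg.2 hN'.le))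
      (by positivity)) (by positivity)
  calc ‖f (ξ + w) - f ξ‖ ≤ N * (|M| * ‖f ((N : ℂ)⁻¹ • w)‖) :=
        hf.norm_add_sub_le_of_inv_smul_mem hN hNw ξ
    _ ≤ N * (|M| * (C * ((N : ℝ)⁻¹ * B))) := by
        gcongr
        exact (hord _ ((suppFun_smul_subset _ _).trans hwK)).trans (by gcongr)
    _ = |M| * C * B := by field_simp

lemma apply_add_eq_of_apply_eq_zero (hf : DemiK (fun t : ℂ => (M : ℂ) * t) V f)
    (hΩ : IsOpen Ω) (hV : V ∈ 𝓝 0) (hfc : Continuous f)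
    (horder : ∀ K : Set (Rn n), IsCompact K → K ⊆ Ω → ∃ C > 0,
      ∀ ξ : CInfOn n Ω, suppFun Ω ξ.val ⊆ K → ‖f ξ‖ ≤ C * ⨆ x ∈ K, ‖ξ.val x‖)
    {y : Rn n} (hy : y ∈ Ω) (hsupp : fsupp Ω Subtype.val f ⊆ {y}) {η : CInfOn n Ω}
    (hη : η.val y = 0) (ξ : CInfOn n Ω) : f (ξ + η) = f ξ := by
  obtain ⟨R, hR, hRΩ⟩ := nhds_basis_closedBall.mem_iff.1 (hΩ.mem_nhds hy)
  obtain ⟨C, hC, hord⟩ := horder _ (isCompact_closedBall y R) hRΩ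
  have hbound : ∀ e > 0, ‖f (ξ + η) - f ξ‖ ≤ |M| * C * e := by
    intro e he
    obtain ⟨w, hwR, hwe, hηw⟩ := exists_eventuallyEq_norm_le hΩ hy hη hR he
    obtain ⟨U, hUη, hUo, hyU⟩ := _root_.eventually_nhds_iff.1 hηw
    have hnull : ∀ c : ℂ, f (c • (η - w)) = 0 := fun c =>
      hf.apply_eq_zero_of_eqOn_zero hΩ hV hfc hUo (hsupp.trans (singleton_subset_iff.2 hyU))
        fun x hx => by simp [sub_eq_zero.2 (hUη x hx)]
    rw [show ξ + η = ξ + w + (η - w) by abel, hf.apply_add_eq_of_forall_smul hΩ hV hnull]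
    exact hf.norm_apply_add_sub_le hΩ hV hC.le hord
      ((suppFun_subset_tsupport _).trans hwR) he.le (fun x _ => hwe x) ξ
  refine eq_of_forall_dist_le fun ε hε => ?_
  have hMC : 0 < |M| * C + 1 := by positivity
  calc dist (f (ξ + η)) (f ξ) ≤ |M| * C * (ε / (|M| * C + 1)) := by
        rw [dist_eq_norm]; exact hbound _ (by positivity)
    _ ≤ ε := by
        rw [mul_div_assoc', div_le_iff₀ hMC]
        nlinarith

end DemiK

open CInfOn in
theorem stmt19_general (n : ℕ) (Ω : Set (Rn n)) (hΩ : IsOpen Ω)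
    (y : Rn n) (hy : y ∈ Ω) (M : ℝ) (hM : 1 ≤ M) :
    (∀ V ∈ 𝓝 (0 : CInfOn n Ω), ∀ f : CInfOn n Ω → ℂ,
      DemiK (fun t : ℂ => (M : ℂ) * t) V f → Continuous f →
      (∀ K : Set (Rn n), IsCompact K → K ⊆ Ω → ∃ C > 0,
        ∀ ξ : CInfOn n Ω, suppFun Ω ξ.val ⊆ K → ‖f ξ‖ ≤ C * ⨆ x ∈ K, ‖ξ.val x‖) →
      fsupp Ω Subtype.val f = {y} →
      ∃ ε > 0, ∃ g : ℂ → ℂ, DemiKC M ε g ∧ ∀ ξ : CInfOn n Ω, f ξ = g (ξ.val y)) ∧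
    (∀ ε > 0, ∀ g : ℂ → ℂ, DemiKC M ε g →
      {ξ : CInfOn n Ω | ‖ξ.val y‖ ≤ ε} ∈ 𝓝 (0 : CInfOn n Ω) ∧
      DemiK (fun t : ℂ => (M : ℂ) * t) {ξ : CInfOn n Ω | ‖ξ.val y‖ ≤ ε}
        (fun ξ : CInfOn n Ω => g (ξ.val y)) ∧
      Continuous (fun ξ : CInfOn n Ω => g (ξ.val y)) ∧
      (∀ K : Set (Rn n), IsCompact K → K ⊆ Ω → ∃ C > 0,
        ∀ ξ : CInfOn n Ω, suppFun Ω ξ.val ⊆ K → ‖g (ξ.val y)‖ ≤ C * ⨆ x ∈ K, ‖ξ.val x‖) ∧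
      (g ≠ 0 →
        fsupp Ω Subtype.val (fun ξ : CInfOn n Ω => g (ξ.val y)) = {y})) := by
  have hM0 : 0 ≤ M := by linarith
  refine ⟨fun V hV f hf hfc horder hsupp => ?_, fun ε hε g hg => ?_⟩
  · let χ := indicatorOne n Ω
    obtain ⟨ε, hε, hεV⟩ :=
      nhds_basis_closedBall.tendsto_left_iff.1 (tendsto_smul_nhds_zero hΩ χ) V hV
    refine ⟨ε, hε, fun z => f (z • χ), hf.demiKC_comp_smul hM0 hεV, fun ξ => ?_⟩
    have hη : (ξ - ξ.val y • χ).val y = 0 := by simp [χ, indicatorOne, hy]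
    simpa using hf.apply_add_eq_of_apply_eq_zero hΩ hV hfc horder hy hsupp.le hη (ξ.val y • χ)
  · set L := M * ‖g ε‖ / ε
    have hL : 0 ≤ L := by positivity
    refine ⟨setOf_norm_apply_le_mem_nhds hy hε, demiK_comp_apply hg y,
      (hg.continuous hε).comp (continuous_eval_const hy),
      fun K hK hKΩ => ⟨L + 1, by positivity, fun ξ hξ => ?_⟩, fsupp_comp_apply hΩ hy hg.1⟩
    calc ‖g (ξ.val y)‖ = ‖g (0 + ξ.val y) - g 0‖ := by rw [zero_add, hg.1, sub_zero]
      _ ≤ L * ‖ξ.val y‖ := hg.norm_add_sub_le hε 0 _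
      _ ≤ (L + 1) * ⨆ x ∈ K, ‖ξ.val x‖ := by
        gcongr
        · linarith
        · exact norm_apply_le_iSup hK hKΩ hξ y

/-- representation of the demi-distributions `f ∈ C^∞(Ω)^{[γ,V]}` (with
`γ t = M·t`, `M ≥ 1`) of order `0` with support `{y}` as `f ξ = g (ξ y)`,
`g ∈ 𝓚_{M,ε}(ℂ, ℂ)`, and the converse construction. -/
theorem stmt19 (n : ℕ) (Ω : Set (Rn n)) (hΩ : IsOpen Ω) (hne : Ω.Nonempty)
    (y : Rn n) (hy : y ∈ Ω) (M : ℝ) (hM : 1 ≤ M) :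
    (∀ V ∈ 𝓝 (0 : CInfOn n Ω), ∀ f : CInfOn n Ω → ℂ,
      DemiK (fun t : ℂ => (M : ℂ) * t) V f → Continuous f →
      (∀ K : Set (Rn n), IsCompact K → K ⊆ Ω → ∃ C > 0,
        ∀ ξ : CInfOn n Ω, suppFun Ω ξ.val ⊆ K → ‖f ξ‖ ≤ C * ⨆ x ∈ K, ‖ξ.val x‖) →
      fsupp Ω Subtype.val f = {y} →
      ∃ ε > 0, ∃ g : ℂ → ℂ, DemiKC M ε g ∧ ∀ ξ : CInfOn n Ω, f ξ = g (ξ.val y)) ∧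
    (∀ ε > 0, ∀ g : ℂ → ℂ, DemiKC M ε g →
      {ξ : CInfOn n Ω | ‖ξ.val y‖ ≤ ε} ∈ 𝓝 (0 : CInfOn n Ω) ∧
      DemiK (fun t : ℂ => (M : ℂ) * t) {ξ : CInfOn n Ω | ‖ξ.val y‖ ≤ ε}
        (fun ξ : CInfOn n Ω => g (ξ.val y)) ∧
      Continuous (fun ξ : CInfOn n Ω => g (ξ.val y)) ∧
      (∀ K : Set (Rn n), IsCompact K → K ⊆ Ω → ∃ C > 0,
        ∀ ξ : CInfOn n Ω, suppFun Ω ξ.val ⊆ K → ‖g (ξ.val y)‖ ≤ C * ⨆ x ∈ K, ‖ξ.val x‖) ∧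
      (g ≠ 0 →
        fsupp Ω Subtype.val (fun ξ : CInfOn n Ω => g (ξ.val y)) = {y})) :=
  stmt19_general n Ω hΩ y hy M hM
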